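/- For every H ⊆ [p]^n and i ∈ [n], shifting in direction i does not increase the exponential dimension: d_E(S_i(H)) ≤ d_E(H). -/

import Mathlib

open Finset

/-- The edge of the one-inclusion graph of `H ⊆ [p]^n` in direction `i` through `g`:
all members of `H` agreeing with `g` off coordinate `i`. -/
def edgeF {n p : ℕ} (H : Finset (Fin n → Fin p)) (i : Fin n) (g : Fin n → Fin p) :
    Finset (Fin n → Fin p) :=
  H.filter (fun h => ∀ j, j ≠ i → h j = g j)

/-- The shifting operator in direction `i`: each edge is pushed downward, i.e. replaced by
the words agreeing with its pattern off `i` whose `i`-th coordinate is among the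
`|e|` smallest values. -/
def shift {n p : ℕ} (i : Fin n) (H : Finset (Fin n → Fin p)) : Finset (Fin n → Fin p) :=
  Finset.univ.filter (fun g => (g i).val < (edgeF H i g).card)

/-- The projection of `H` to a sequence `S` of coordinates. -/
def projF {n p k : ℕ} (H : Finset (Fin n → Fin p)) (S : Fin k → Fin n) :
    Finset (Fin k → Fin p) :=
  H.image (fun h => fun j => h (S j))

/-- `H` E-shatters size `k` if some sequence of `k` coordinates has projection of size `≥ 2^k`. -/
def EShatters {n p : ℕ} (H : Finset (Fin n → Fin p)) (k : ℕ) : Prop :=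
  ∃ S : Fin k → Fin n, 2 ^ k ≤ (projF H S).card

/-- The exponential dimension: the largest `k` that `H` E-shatters. -/
noncomputable def dE {n p : ℕ} (H : Finset (Fin n → Fin p)) : ℕ :=
  sSup {k | EShatters H k}

/-- The number of edges of the one-inclusion graph of `H` in direction `j`
(equivalently, the number of distinct patterns of `H` off coordinate `j`). -/
def numEdges {n p : ℕ} (H : Finset (Fin n → Fin p)) (j : Fin n) : ℕ :=
  (H.image (fun h => fun k : {k : Fin n // k ≠ j} => h k.1)).card

/-- `avd'(H) = (1/|H|) Σ_{e ∈ E} (|e| − 1)`, over all edges including singletons. -/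
def avd' {n p : ℕ} (H : Finset (Fin n → Fin p)) : ℚ :=
  (∑ j : Fin n, ((H.card : ℚ) - (numEdges H j : ℚ))) / (H.card : ℚ)

/-- The degree of `v`: the number of non-singleton edges of the one-inclusion graph
containing `v`. -/
def deg {n p : ℕ} (H : Finset (Fin n → Fin p)) (v : Fin n → Fin p) : ℕ :=
  (Finset.univ.filter (fun j : Fin n => 2 ≤ (edgeF H j v).card)).card

/-- The average degree of the one-inclusion graph of `H`. -/
def avd {n p : ℕ} (H : Finset (Fin n → Fin p)) : ℚ :=
  (∑ v ∈ H, (deg H v : ℚ)) / (H.card : ℚ)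

/-! Shifting in direction `i` does not enlarge any projection `H|_S`, which is all that `dE` sees.
If `i` is not among the coordinates of `S`, every word of `S_i(H)` agrees off `i` with a word of
`H`, so `S_i(H)|_S ⊆ H|_S`. Otherwise split `H|_S` according to the pattern on the coordinates of
`S` other than `i`: the patterns occurring in `S_i(H)` also occur in `H`, and over a fixed pattern
the `i`-values of `S_i(H)` form an initial segment `{0, …, m - 1}` where `m` is the size of some
edge of `H` with that pattern, hence at most the number of `i`-values `H` takes there. -/

section CardImage

variable {α β γ : Type*} [DecidableEq β] [DecidableEq γ]

theorem card_image_eq_card_image_of_factors (X : Finset α) {φ : α → β} {κ : α → γ}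
    (F : β → γ) (G : γ → β) (hF : ∀ x, κ x = F (φ x)) (hG : ∀ x, φ x = G (κ x)) :
    (X.image φ).card = (X.image κ).card := by
  have hφ : X.image φ = (X.image κ).image G := by
    rw [image_image]; exact image_congr fun x _ => hG x
  have hκ : X.image κ = (X.image φ).image F := by
    rw [image_image]; exact image_congr fun x _ => hF x
  exact le_antisymm (hφ ▸ card_image_le) (hκ ▸ card_image_le)

theorem card_image_pair_eq_sum_card_image_fiber (X : Finset α) (f : α → β) (g : α → γ) :
    (X.image fun x => (f x, g x)).card =
      ∑ b ∈ X.image f, ((X.filter (f · = b)).image g).card := by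
  rw [card_eq_sum_card_fiberwise (f := Prod.fst) fun _ hy => by
    obtain ⟨x, hx, rfl⟩ := mem_image.mp hy; exact mem_image_of_mem f hx]
  refine sum_congr rfl fun b _ => ?_
  have hfiber : (X.image fun x => (f x, g x)).filter (·.1 = b) =
      ((X.filter (f · = b)).image g).image (Prod.mk b) := by
    ext ⟨b', c⟩
    simp only [mem_filter, mem_image, Prod.mk.injEq]
    constructor
    · rintro ⟨⟨x, hx, rfl, rfl⟩, rfl⟩
      exact ⟨g x, ⟨x, ⟨hx, rfl⟩, rfl⟩, rfl, rfl⟩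
    · rintro ⟨_, ⟨x, ⟨hx, rfl⟩, rfl⟩, rfl, rfl⟩; exact ⟨⟨x, hx, rfl, rfl⟩, rfl⟩
  rw [hfiber, card_image_of_injective _ (Prod.mk_right_injective b)]

end CardImage

theorem card_le_of_forall_val_lt {p N : ℕ} {A : Finset (Fin p)} (h : ∀ t ∈ A, t.val < N) :
    A.card ≤ N := by
  rw [← card_image_of_injective A Fin.val_injective, ← card_range N]
  exact card_le_card fun _ hx => by
    obtain ⟨t, ht, rfl⟩ := mem_image.mp hx
    exact mem_range.mpr (h t ht)

section Shift

variable {n p : ℕ} {H : Finset (Fin n → Fin p)} {i : Fin n}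

theorem mem_shift_iff {g : Fin n → Fin p} :
    g ∈ shift i H ↔ (g i).val < (edgeF H i g).card := by
  simp [shift]

theorem mem_edgeF_iff {g h : Fin n → Fin p} :
    h ∈ edgeF H i g ↔ h ∈ H ∧ ∀ j, j ≠ i → h j = g j :=
  mem_filter

theorem injOn_eval_edgeF (g : Fin n → Fin p) :
    Set.InjOn (fun h : Fin n → Fin p => h i) (edgeF H i g) := by
  intro h₁ hh₁ h₂ hh₂ heq
  funext j
  by_cases hj : j = i
  · exact hj ▸ heq
  · rw [((mem_edgeF_iff.mp hh₁).2 j hj), ((mem_edgeF_iff.mp hh₂).2 j hj)]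

variable {β : Type*} [DecidableEq β] {ψ : (Fin n → Fin p) → β}

theorem image_shift_subset_image
    (hψ : ∀ g g', (∀ j, j ≠ i → g j = g' j) → ψ g = ψ g') :
    (shift i H).image ψ ⊆ H.image ψ := by
  intro b hb
  obtain ⟨g, hg, rfl⟩ := mem_image.mp hb
  obtain ⟨h, hh⟩ := card_pos.mp (Nat.zero_lt_of_lt (mem_shift_iff.mp hg))
  obtain ⟨hH, hagree⟩ := mem_edgeF_iff.mp hh
  exact mem_image.mpr ⟨h, hH, hψ h g hagree⟩

theorem card_image_eval_filter_shift_le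
    (hψ : ∀ g g', (∀ j, j ≠ i → g j = g' j) → ψ g = ψ g') (b : β) :
    (((shift i H).filter (ψ · = b)).image (· i)).card ≤
      ((H.filter (ψ · = b)).image (· i)).card := by
  refine card_le_of_forall_val_lt fun t ht => ?_
  obtain ⟨g, hg, rfl⟩ := mem_image.mp ht
  obtain ⟨hgshift, rfl⟩ := mem_filter.mp hg
  have hedge : edgeF H i g ⊆ H.filter (ψ · = ψ g) := fun h hh => by
    obtain ⟨hH, hagree⟩ := mem_edgeF_iff.mp hh
    exact mem_filter.mpr ⟨hH, hψ h g hagree⟩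
  calc (g i).val < (edgeF H i g).card := mem_shift_iff.mp hgshift
    _ = ((edgeF H i g).image (· i)).card := (card_image_of_injOn (injOn_eval_edgeF g)).symm
    _ ≤ _ := card_le_card (image_subset_image hedge)

end Shift

theorem card_projF_eq_card_image_pair {n p k : ℕ} (X : Finset (Fin n → Fin p))
    {S : Fin k → Fin n} {i : Fin n} {j₀ : Fin k} (hj₀ : S j₀ = i) :
    (projF X S).card =
      (X.image fun g => (fun j : {j // S j ≠ i} => g (S j), g i)).card := by
  refine card_image_eq_card_image_of_factors X (fun q => (fun j => q j.1, q j₀))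
    (fun c j => if h : S j = i then c.2 else c.1 ⟨j, h⟩) (fun g => ?_) (fun g => ?_)
  · simp only [hj₀]
  · funext j
    by_cases h : S j = i <;> simp [h]

theorem card_projF_shift_le {n p k : ℕ} (H : Finset (Fin n → Fin p)) (i : Fin n)
    (S : Fin k → Fin n) : (projF (shift i H) S).card ≤ (projF H S).card := by
  by_cases hi : ∃ j₀, S j₀ = i
  · obtain ⟨j₀, hj₀⟩ := hi
    set offI : (Fin n → Fin p) → {j // S j ≠ i} → Fin p := fun g j => g (S j)
    have hoffI : ∀ g g' : Fin n → Fin p, (∀ j, j ≠ i → g j = g' j) → offI g = offI g' :=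
      fun g g' h => funext fun j => h (S j) j.2
    rw [card_projF_eq_card_image_pair _ hj₀, card_projF_eq_card_image_pair _ hj₀,
      card_image_pair_eq_sum_card_image_fiber, card_image_pair_eq_sum_card_image_fiber]
    calc _ ≤ ∑ b ∈ (shift i H).image offI, ((H.filter (offI · = b)).image (· i)).card :=
          sum_le_sum fun b _ => card_image_eval_filter_shift_le hoffI b
      _ ≤ _ := sum_le_sum_of_subset (image_shift_subset_image hoffI)
  · push Not at hi
    exact card_le_card <| image_shift_subset_image fun g g' h => funext fun j => h (S j) (hi j)

theorem bddAbove_setOf_eShatters {n p : ℕ} (H : Finset (Fin n → Fin p)) :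
    BddAbove {k | EShatters H k} :=
  ⟨H.card, fun k ⟨_, hS⟩ =>
    (Nat.lt_two_pow_self (n := k)).le.trans (hS.trans card_image_le)⟩

theorem dE_le_dE_of_card_projF_le {n p : ℕ} {A B : Finset (Fin n → Fin p)}
    (h : ∀ k (S : Fin k → Fin n), (projF A S).card ≤ (projF B S).card) : dE A ≤ dE B :=
  csSup_le_csSup' (bddAbove_setOf_eShatters B) fun k ⟨S, hS⟩ => ⟨S, hS.trans (h k S)⟩

/-- Shifting does not increase the exponential dimension. -/
theorem dE_shift_le {n p : ℕ} (H : Finset (Fin n → Fin p)) (i : Fin n) :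
    dE (shift i H) ≤ dE H :=
  dE_le_dE_of_card_projF_le fun _ S => card_projF_shift_le H i S
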